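/- Let Λ ⊆ ℝ^c be a full-rank integral unimodular lattice which is odd (some vector of Λ has odd square-length), let χ ∈ Λ be a characteristic vector, and let q be a real number with 0 < q < 1. With Λ_ev = {λ ∈ Λ : ⟨λ,λ⟩ even}, Λ_odd = {λ ∈ Λ : ⟨λ,λ⟩ odd}, Λ⁺ = Λ_ev ∪ (χ/2 + Λ_ev) and Λ⁻ = Λ_ev ∪ (χ/2 + Λ_odd), all three series below converge and ∑_{λ ∈ Λ} (−1)^{⟨χ, λ⟩} q^{4‖λ + χ/2‖²} = ∑_{μ ∈ Λ⁺} q^{4‖μ‖²} − ∑_{μ ∈ Λ⁻} q^{4‖μ‖²}, where all exponents 4‖λ + χ/2‖² and 4‖μ‖² are natural numbers. -/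

import Mathlib

/-!
Split `Λ = Λ_ev ⊔ Λ_odd`. Since `χ` is characteristic, `(-1)^⟨χ, λ⟩` is `1` on `Λ_ev` and `-1`
on `Λ_odd`, so the left side is `∑_{Λ_ev} q^{4‖λ + χ/2‖²} - ∑_{Λ_odd} q^{4‖λ + χ/2‖²}`. As `Λ`
is odd, `χ/2 ∉ Λ`, so `Λ^±` is the disjoint union of `Λ_ev` and the translate of `Λ_ev` resp.
`Λ_odd` by `χ/2`, and the two `Λ_ev` contributions cancel. Every series involved is a sub-series
of `∑_{μ ∈ ½Λ} q^{4‖μ‖²} = ∑_{z ∈ Λ} q^{‖z‖²}`, which converges by comparison with the lattice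
series `∑_{z ∈ Λ} ‖z‖^{-r}`, `r > rank Λ`.
-/

open scoped BigOperators

noncomputable section

/-- The standard Euclidean inner product on `ℝ^c`. -/
def inn {c : ℕ} (x y : Fin c → ℝ) : ℝ := ∑ i, x i * y i

/-- The set of lattice vectors of even square-length. -/
def evenPart {c : ℕ} (Λ : AddSubgroup (Fin c → ℝ)) : Set (Fin c → ℝ) :=
  {x | x ∈ Λ ∧ ∃ n : ℤ, inn x x = ((2 * n : ℤ) : ℝ)}

/-- The set of lattice vectors of odd square-length. -/
def oddPart {c : ℕ} (Λ : AddSubgroup (Fin c → ℝ)) : Set (Fin c → ℝ) :=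
  {x | x ∈ Λ ∧ ∃ n : ℤ, inn x x = ((2 * n + 1 : ℤ) : ℝ)}

/-- The even neighbor `Λ⁺ = Λ_ev ∪ (χ/2 + Λ_ev)`. -/
def plusNeighbor {c : ℕ} (Λ : AddSubgroup (Fin c → ℝ)) (χ : Fin c → ℝ) : Set (Fin c → ℝ) :=
  evenPart Λ ∪ (fun y => (1/2 : ℝ) • χ + y) '' evenPart Λ

/-- The even neighbor `Λ⁻ = Λ_ev ∪ (χ/2 + Λ_odd)`. -/
def minusNeighbor {c : ℕ} (Λ : AddSubgroup (Fin c → ℝ)) (χ : Fin c → ℝ) : Set (Fin c → ℝ) :=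
  evenPart Λ ∪ (fun y => (1/2 : ℝ) • χ + y) '' oddPart Λ


theorem AddSubgroup.summable_pow_of_sq_norm_le {E : Type*} [NormedAddCommGroup E]
    [NormedSpace ℝ E] [FiniteDimensional ℝ E] (L : AddSubgroup E) [DiscreteTopology L]
    {q : ℝ} (hq0 : 0 ≤ q) (hq1 : q < 1) {m : L → ℕ} (hm : ∀ z : L, ‖(z : E)‖ ^ 2 ≤ m z) :
    Summable fun z => q ^ m z := by
  have : DiscreteTopology (AddSubgroup.toIntSubmodule L) := ‹_›
  set d := Module.finrank ℤ (AddSubgroup.toIntSubmodule L)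
  have hinv : Summable fun z : L => ‖z‖⁻¹ ^ (2 * (d + 1)) :=
    ZLattice.summable_norm_pow_inv (AddSubgroup.toIntSubmodule L) _ (by omega)
  obtain ⟨C, hC⟩ := (tendsto_pow_const_mul_const_pow_of_lt_one (d + 1) hq0 hq1).bddAbove_range
  refine .of_norm_bounded_eventually (hinv.mul_left C) ?_
  filter_upwards [(Set.finite_singleton (0 : L)).compl_mem_cofinite] with z hz
  have hz0 : 0 < ‖(z : E)‖ := norm_pos_iff.2 (by simpa using hz)
  have hpow : ‖(z : E)‖ ^ (2 * (d + 1)) ≤ (m z : ℝ) ^ (d + 1) := by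
    rw [pow_mul]; gcongr; exact hm z
  rw [Real.norm_of_nonneg (by positivity), AddSubgroup.coe_norm, inv_pow, ← div_eq_mul_inv,
    le_div_iff₀ (by positivity)]
  calc q ^ m z * ‖(z : E)‖ ^ (2 * (d + 1)) ≤ q ^ m z * (m z : ℝ) ^ (d + 1) := by gcongr
    _ ≤ C := by rw [mul_comm]; exact hC ⟨_, rfl⟩

theorem Summable.negOnePow_mul {ι : Type*} {f : ι → ℝ} (hf : Summable f) (s : ι → ℤ) :
    Summable fun i => ((s i).negOnePow : ℝ) * f i :=
  .of_norm (by simpa [norm_mul] using hf.norm)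

theorem Summable.comp_inclusion {β α : Type*} [AddCommGroup α] [UniformSpace α]
    [IsUniformAddGroup α] [CompleteSpace α] {f : β → α} {s t : Set β} (hst : s ⊆ t)
    (hf : Summable fun x : t => f x) : Summable fun x : s => f x :=
  hf.comp_injective (Set.inclusion_injective hst)

theorem tsum_union_image_add_left {E α : Type*} [AddGroup E] [AddCommGroup α]
    [UniformSpace α] [IsUniformAddGroup α] [CompleteSpace α] [T2Space α] {Λ : AddSubgroup E}
    {A S : Set E} {v : E} (hv : v ∉ Λ) (hA : A ⊆ Λ) (hS : S ⊆ Λ) {f : E → α}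
    (hf : Summable fun μ : ↥(A ∪ (fun y => v + y) '' S) => f μ) :
    ∑' μ : ↥(A ∪ (fun y => v + y) '' S), f μ = ∑' x : A, f x + ∑' y : S, f (v + y) := by
  have hdisj : Disjoint A ((fun y => v + y) '' S) := by
    refine Set.disjoint_left.2 fun x hxA ⟨y, hyS, hxy⟩ => hv ?_
    simpa [← hxy] using sub_mem (hA hxA) (hS hyS)
  rw [Summable.tsum_union_disjoint (f := f) hdisj
      (hf.comp_inclusion Set.subset_union_left) (hf.comp_inclusion Set.subset_union_right),
    tsum_image f (add_right_injective v).injOn]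

section

variable {c : ℕ}

theorem inn_eq_dotProduct (x y : Fin c → ℝ) : inn x y = x ⬝ᵥ y := rfl

theorem inn_self_nonneg (x : Fin c → ℝ) : 0 ≤ inn x x :=
  Finset.sum_nonneg fun i _ => mul_self_nonneg (x i)

theorem inn_smul_left (r : ℝ) (x y : Fin c → ℝ) : inn (r • x) y = r * inn x y := by
  simp [inn_eq_dotProduct]

theorem inn_add_self_add_self (x : Fin c → ℝ) : inn (x + x) (x + x) = 4 * inn x x := by
  simp only [inn_eq_dotProduct, add_dotProduct, dotProduct_add]; ring

theorem sq_norm_le_inn_self (x : Fin c → ℝ) : ‖x‖ ^ 2 ≤ inn x x := by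
  refine (Real.le_sqrt (norm_nonneg x) (inn_self_nonneg x)).1
    ((pi_norm_le_iff_of_nonneg (Real.sqrt_nonneg _)).2 fun i => Real.abs_le_sqrt ?_)
  simpa [sq, inn] using Finset.single_le_sum (fun j _ => mul_self_nonneg (x j)) (Finset.mem_univ i)

def IsIntegralLattice (Λ : AddSubgroup (Fin c → ℝ)) : Prop :=
  ∀ x ∈ Λ, ∀ y ∈ Λ, ∃ n : ℤ, inn x y = n

def IsCharacteristicVector (Λ : AddSubgroup (Fin c → ℝ)) (χ : Fin c → ℝ) : Prop :=
  ∀ l ∈ Λ, ∃ a b : ℤ, inn χ l = a ∧ inn l l = b ∧ a ≡ b [ZMOD 2]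

def halfLattice (Λ : AddSubgroup (Fin c → ℝ)) : Set (Fin c → ℝ) :=
  {μ | μ + μ ∈ Λ}

/-- `q ^ (4‖μ‖²)`; the floor and `toNat` are exact only where `4‖μ‖²` is a natural number,
as on `halfLattice Λ` for integral `Λ`. -/
def thetaTerm (q : ℝ) (μ : Fin c → ℝ) : ℝ :=
  q ^ (⌊4 * inn μ μ⌋).toNat

variable {Λ : AddSubgroup (Fin c → ℝ)}

theorem IsIntegralLattice.exists_natCast_eq_inn_self (hΛ : IsIntegralLattice Λ)
    {x : Fin c → ℝ} (hx : x ∈ Λ) : ∃ n : ℕ, inn x x = n := by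
  obtain ⟨n, hn⟩ := hΛ x hx x hx
  lift n to ℕ using by exact_mod_cast hn ▸ inn_self_nonneg x
  exact ⟨n, hn⟩

theorem IsIntegralLattice.exists_natCast_eq_four_mul_inn_self (hΛ : IsIntegralLattice Λ)
    {μ : Fin c → ℝ} (hμ : μ ∈ halfLattice Λ) : ∃ n : ℕ, 4 * inn μ μ = n := by
  rw [← inn_add_self_add_self]
  exact hΛ.exists_natCast_eq_inn_self hμ

theorem IsIntegralLattice.summable_thetaTerm [DiscreteTopology Λ]
    (hΛ : IsIntegralLattice Λ) {q : ℝ} (hq0 : 0 ≤ q) (hq1 : q < 1) :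
    Summable fun μ : halfLattice Λ => thetaTerm q (μ : Fin c → ℝ) := by
  have hm (z : Λ) : ‖(z : Fin c → ℝ)‖ ^ 2 ≤ (⌊inn (z : Fin c → ℝ) z⌋).toNat := by
    obtain ⟨n, hn⟩ := hΛ.exists_natCast_eq_inn_self z.2
    simpa [hn] using sq_norm_le_inn_self (z : Fin c → ℝ)
  have hdouble : Function.Injective fun μ : halfLattice Λ => (⟨μ + μ, μ.2⟩ : Λ) :=
    fun μ ν h => Subtype.ext <| by simpa [← two_smul ℝ] using congrArg Subtype.val h
  simpa [Function.comp_def, thetaTerm, inn_add_self_add_self] using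
    (Λ.summable_pow_of_sq_norm_le hq0 hq1 hm).comp_injective hdouble

theorem mem_halfLattice_of_mem {x : Fin c → ℝ} (hx : x ∈ Λ) : x ∈ halfLattice Λ :=
  add_mem hx hx

theorem half_smul_add_mem_halfLattice {χ y : Fin c → ℝ} (hχ : χ ∈ Λ) (hy : y ∈ Λ) :
    (1 / 2 : ℝ) • χ + y ∈ halfLattice Λ := by
  have : (1 / 2 : ℝ) • χ + y + ((1 / 2 : ℝ) • χ + y) = χ + (y + y) := by module
  show _ ∈ Λ
  rw [this]
  exact add_mem hχ (add_mem hy hy)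

theorem add_half_smul_mem_halfLattice {χ l : Fin c → ℝ} (hχ : χ ∈ Λ) (hl : l ∈ Λ) :
    l + (1 / 2 : ℝ) • χ ∈ halfLattice Λ :=
  add_comm l _ ▸ half_smul_add_mem_halfLattice hχ hl

theorem Summable.comp_add_half_smul {χ : Fin c → ℝ} (hχ : χ ∈ Λ) {f : (Fin c → ℝ) → ℝ}
    (hf : Summable fun μ : halfLattice Λ => f μ) :
    Summable fun l : Λ => f (l + (1 / 2 : ℝ) • χ) := by
  have hinj : Function.Injective fun l : Λ =>
      (⟨_, add_half_smul_mem_halfLattice hχ l.2⟩ : halfLattice Λ) :=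
    fun l l' h => Subtype.ext <| add_right_cancel (congrArg Subtype.val h :
      (l : Fin c → ℝ) + (1 / 2 : ℝ) • χ = l' + (1 / 2 : ℝ) • χ)
  exact hf.comp_injective hinj

theorem union_image_half_smul_add_subset_halfLattice {χ : Fin c → ℝ} (hχ : χ ∈ Λ)
    {A S : Set (Fin c → ℝ)} (hA : A ⊆ Λ) (hS : S ⊆ Λ) :
    A ∪ (fun y => (1 / 2 : ℝ) • χ + y) '' S ⊆ halfLattice Λ := by
  rintro μ (hμ | ⟨y, hy, rfl⟩)
  · exact mem_halfLattice_of_mem (hA hμ)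
  · exact half_smul_add_mem_halfLattice hχ (hS hy)

theorem evenPart_subset (Λ : AddSubgroup (Fin c → ℝ)) : evenPart Λ ⊆ Λ := fun _ hx => hx.1

theorem oddPart_subset (Λ : AddSubgroup (Fin c → ℝ)) : oddPart Λ ⊆ Λ := fun _ hx => hx.1

theorem plusNeighbor_subset_halfLattice {χ : Fin c → ℝ} (hχ : χ ∈ Λ) :
    plusNeighbor Λ χ ⊆ halfLattice Λ :=
  union_image_half_smul_add_subset_halfLattice hχ (evenPart_subset Λ) (evenPart_subset Λ)

theorem minusNeighbor_subset_halfLattice {χ : Fin c → ℝ} (hχ : χ ∈ Λ) :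
    minusNeighbor Λ χ ⊆ halfLattice Λ :=
  union_image_half_smul_add_subset_halfLattice hχ (evenPart_subset Λ) (oddPart_subset Λ)

theorem IsIntegralLattice.evenPart_union_oddPart (hΛ : IsIntegralLattice Λ) :
    evenPart Λ ∪ oddPart Λ = Λ := by
  refine subset_antisymm (Set.union_subset (evenPart_subset Λ) (oddPart_subset Λ)) fun x hx => ?_
  obtain ⟨n, hn⟩ := hΛ x hx x hx
  rcases Int.even_or_odd' n with ⟨k, rfl | rfl⟩
  · exact Or.inl ⟨hx, k, hn⟩
  · exact Or.inr ⟨hx, k, hn⟩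

theorem disjoint_evenPart_oddPart : Disjoint (evenPart Λ) (oddPart Λ) := by
  refine Set.disjoint_left.2 fun x ⟨_, m, hm⟩ ⟨_, n, hn⟩ => ?_
  have : 2 * m = 2 * n + 1 := by exact_mod_cast hm.symm.trans hn
  omega

variable {χ : Fin c → ℝ}

theorem IsCharacteristicVector.negOnePow_floor_inn {l : Fin c → ℝ}
    (hχ : IsCharacteristicVector Λ χ) (hl : l ∈ Λ) {n : ℤ} (hn : inn l l = n) :
    (⌊inn χ l⌋).negOnePow = n.negOnePow := by
  obtain ⟨a, b, ha, hb, hab⟩ := hχ l hl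
  obtain rfl : b = n := by exact_mod_cast hb.symm.trans hn
  rw [ha, Int.floor_intCast, Int.negOnePow_eq_iff, Int.even_sub]
  simp only [Int.even_iff]
  exact iff_of_eq (congrArg (· = 0) hab)

theorem IsCharacteristicVector.negOnePow_floor_inn_of_mem_evenPart {l : Fin c → ℝ}
    (hχ : IsCharacteristicVector Λ χ) (hl : l ∈ evenPart Λ) : (⌊inn χ l⌋).negOnePow = 1 := by
  obtain ⟨hlΛ, n, hn⟩ := hl
  rw [hχ.negOnePow_floor_inn hlΛ hn, Int.negOnePow_even _ (even_two_mul n)]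

theorem IsCharacteristicVector.negOnePow_floor_inn_of_mem_oddPart {l : Fin c → ℝ}
    (hχ : IsCharacteristicVector Λ χ) (hl : l ∈ oddPart Λ) : (⌊inn χ l⌋).negOnePow = -1 := by
  obtain ⟨hlΛ, n, hn⟩ := hl
  rw [hχ.negOnePow_floor_inn hlΛ hn, Int.negOnePow_odd _ (odd_two_mul_add_one n)]

/-- In an odd lattice `χ/2` is not a lattice vector: otherwise every `⟨χ, x⟩`, hence every
`⟨x, x⟩`, would be even. -/
theorem IsCharacteristicVector.half_smul_not_mem (hΛ : IsIntegralLattice Λ)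
    (hχ : IsCharacteristicVector Λ χ) (hOdd : ∃ x ∈ Λ, ∃ n : ℤ, inn x x = n ∧ Odd n) :
    (1 / 2 : ℝ) • χ ∉ Λ := by
  intro hhalf
  obtain ⟨x, hx, n, hn, k, rfl⟩ := hOdd
  obtain ⟨a, b, ha, hb, hab⟩ := hχ x hx
  obtain ⟨m, hm⟩ := hΛ _ hhalf x hx
  have hχx : inn χ x = 2 * inn ((1 / 2 : ℝ) • χ) x := by
    rw [inn_smul_left, ← mul_assoc]; norm_num
  have ha2 : (a : ℝ) = 2 * m := by rw [← ha, hχx, hm]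
  have hb2 : (b : ℝ) = 2 * k + 1 := by rw [← hb, hn]; push_cast; ring
  have : a % 2 = b % 2 := hab
  have : a = 2 * m := by exact_mod_cast ha2
  have : b = 2 * k + 1 := by exact_mod_cast hb2
  omega

theorem IsCharacteristicVector.tsum_negOnePow_mul (hΛ : IsIntegralLattice Λ)
    (hχ : IsCharacteristicVector Λ χ) {f : (Fin c → ℝ) → ℝ}
    (hf : Summable fun l : Λ => f l) :
    ∑' l : Λ, ((⌊inn χ (l : Fin c → ℝ)⌋).negOnePow : ℝ) * f l
      = ∑' x : evenPart Λ, f x - ∑' x : oddPart Λ, f x := by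
  let g : (Fin c → ℝ) → ℝ := fun l => ((⌊inn χ l⌋).negOnePow : ℝ) * f l
  have hg : Summable fun l : (Λ : Set (Fin c → ℝ)) => g l :=
    hf.negOnePow_mul fun l => ⌊inn χ (l : Fin c → ℝ)⌋
  calc ∑' l : Λ, g l = ∑' x : ↥(evenPart Λ ∪ oddPart Λ), g x :=
        (tsum_congr_set_coe g hΛ.evenPart_union_oddPart).symm
    _ = ∑' x : evenPart Λ, g x + ∑' x : oddPart Λ, g x :=
        Summable.tsum_union_disjoint disjoint_evenPart_oddPart
          (hg.comp_inclusion (evenPart_subset Λ)) (hg.comp_inclusion (oddPart_subset Λ))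
    _ = ∑' x : evenPart Λ, f x + ∑' x : oddPart Λ, -f x := by
        congr 1 <;> refine tsum_congr fun x => ?_
        · simp only [g, hχ.negOnePow_floor_inn_of_mem_evenPart x.2, Units.val_one, Int.cast_one,
            one_mul]
        · simp only [g, hχ.negOnePow_floor_inn_of_mem_oddPart x.2, Units.val_neg, Units.val_one,
            Int.cast_neg, Int.cast_one, neg_one_mul]
    _ = _ := by rw [tsum_neg, sub_eq_add_neg]

theorem IsCharacteristicVector.tsum_negOnePow_mul_add_half_smul (hΛ : IsIntegralLattice Λ)
    (hχ : IsCharacteristicVector Λ χ) (hχΛ : χ ∈ Λ) (hhalf : (1 / 2 : ℝ) • χ ∉ Λ)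
    {f : (Fin c → ℝ) → ℝ} (hf : Summable fun μ : halfLattice Λ => f μ) :
    ∑' l : Λ, ((⌊inn χ (l : Fin c → ℝ)⌋).negOnePow : ℝ) * f (l + (1 / 2 : ℝ) • χ)
      = ∑' μ : plusNeighbor Λ χ, f μ - ∑' μ : minusNeighbor Λ χ, f μ := by
  rw [hχ.tsum_negOnePow_mul (f := fun x => f (x + (1 / 2 : ℝ) • χ)) hΛ
      (hf.comp_add_half_smul hχΛ), plusNeighbor, minusNeighbor,
    tsum_union_image_add_left hhalf (evenPart_subset Λ) (evenPart_subset Λ)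
      (hf.comp_inclusion (plusNeighbor_subset_halfLattice hχΛ)),
    tsum_union_image_add_left hhalf (evenPart_subset Λ) (oddPart_subset Λ)
      (hf.comp_inclusion (minusNeighbor_subset_halfLattice hχΛ))]
  simp only [add_comm _ ((1 / 2 : ℝ) • χ)]
  ring

end

theorem rr_partition_function_eq_difference_of_thetas_general {c : ℕ}
    (Λ : AddSubgroup (Fin c → ℝ))
    (hDisc : DiscreteTopology Λ)
    (hInt : ∀ x ∈ Λ, ∀ y ∈ Λ, ∃ n : ℤ, inn x y = (n : ℝ))
    (hOdd : ∃ x ∈ Λ, ∃ n : ℤ, inn x x = (n : ℝ) ∧ Odd n)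
    (χ : Fin c → ℝ) (hχ : χ ∈ Λ)
    (hchar : ∀ l ∈ Λ, ∃ a b : ℤ, inn χ l = (a : ℝ) ∧ inn l l = (b : ℝ) ∧ a ≡ b [ZMOD 2])
    (q : ℝ) (hq0 : 0 < q) (hq1 : q < 1) :
    (∀ l ∈ Λ, ∃ n : ℕ,
      4 * inn (l + (1/2 : ℝ) • χ) (l + (1/2 : ℝ) • χ) = (n : ℝ)) ∧
    (∀ μ ∈ plusNeighbor Λ χ, ∃ n : ℕ, 4 * inn μ μ = (n : ℝ)) ∧
    (∀ μ ∈ minusNeighbor Λ χ, ∃ n : ℕ, 4 * inn μ μ = (n : ℝ)) ∧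
    Summable (fun l : Λ => ((Int.negOnePow ⌊inn χ (l : Fin c → ℝ)⌋ : ℤˣ) : ℝ) *
      q ^ (⌊4 * inn ((l : Fin c → ℝ) + (1/2 : ℝ) • χ)
              ((l : Fin c → ℝ) + (1/2 : ℝ) • χ)⌋).toNat) ∧
    Summable (fun μ : plusNeighbor Λ χ =>
      q ^ (⌊4 * inn (μ : Fin c → ℝ) (μ : Fin c → ℝ)⌋).toNat) ∧
    Summable (fun μ : minusNeighbor Λ χ =>
      q ^ (⌊4 * inn (μ : Fin c → ℝ) (μ : Fin c → ℝ)⌋).toNat) ∧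
    (∑' l : Λ, ((Int.negOnePow ⌊inn χ (l : Fin c → ℝ)⌋ : ℤˣ) : ℝ) *
        q ^ (⌊4 * inn ((l : Fin c → ℝ) + (1/2 : ℝ) • χ)
                ((l : Fin c → ℝ) + (1/2 : ℝ) • χ)⌋).toNat)
      = (∑' μ : plusNeighbor Λ χ, q ^ (⌊4 * inn (μ : Fin c → ℝ) (μ : Fin c → ℝ)⌋).toNat)
        - (∑' μ : minusNeighbor Λ χ, q ^ (⌊4 * inn (μ : Fin c → ℝ) (μ : Fin c → ℝ)⌋).toNat) := by
  have hΛ : IsIntegralLattice Λ := hInt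
  have hχc : IsCharacteristicVector Λ χ := hchar
  have hsum := hΛ.summable_thetaTerm hq0.le hq1
  have hsumΛ := hsum.comp_add_half_smul hχ
  have hplus := hsum.comp_inclusion (plusNeighbor_subset_halfLattice hχ)
  have hminus := hsum.comp_inclusion (minusNeighbor_subset_halfLattice hχ)
  refine ⟨fun l hl => hΛ.exists_natCast_eq_four_mul_inn_self (add_half_smul_mem_halfLattice hχ hl),
    fun μ hμ => hΛ.exists_natCast_eq_four_mul_inn_self (plusNeighbor_subset_halfLattice hχ hμ),
    fun μ hμ => hΛ.exists_natCast_eq_four_mul_inn_self (minusNeighbor_subset_halfLattice hχ hμ),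
    hsumΛ.negOnePow_mul _, hplus, hminus, ?_⟩
  exact hχc.tsum_negOnePow_mul_add_half_smul hΛ hχ (hχc.half_smul_not_mem hΛ hOdd) hsum

theorem rr_partition_function_eq_difference_of_thetas {c : ℕ}
    (Λ : AddSubgroup (Fin c → ℝ))
    (hDisc : DiscreteTopology Λ)
    (hInt : ∀ x ∈ Λ, ∀ y ∈ Λ, ∃ n : ℤ, inn x y = (n : ℝ))
    (hFull : Submodule.span ℝ (Λ : Set (Fin c → ℝ)) = ⊤)
    (hUni : (Λ : Set (Fin c → ℝ)) = {x : Fin c → ℝ | ∀ y ∈ Λ, ∃ n : ℤ, inn x y = (n : ℝ)})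
    (hOdd : ∃ x ∈ Λ, ∃ n : ℤ, inn x x = (n : ℝ) ∧ Odd n)
    (χ : Fin c → ℝ) (hχ : χ ∈ Λ)
    (hchar : ∀ l ∈ Λ, ∃ a b : ℤ, inn χ l = (a : ℝ) ∧ inn l l = (b : ℝ) ∧ a ≡ b [ZMOD 2])
    (q : ℝ) (hq0 : 0 < q) (hq1 : q < 1) :
    (∀ l ∈ Λ, ∃ n : ℕ,
      4 * inn (l + (1/2 : ℝ) • χ) (l + (1/2 : ℝ) • χ) = (n : ℝ)) ∧
    (∀ μ ∈ plusNeighbor Λ χ, ∃ n : ℕ, 4 * inn μ μ = (n : ℝ)) ∧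
    (∀ μ ∈ minusNeighbor Λ χ, ∃ n : ℕ, 4 * inn μ μ = (n : ℝ)) ∧
    Summable (fun l : Λ => ((Int.negOnePow ⌊inn χ (l : Fin c → ℝ)⌋ : ℤˣ) : ℝ) *
      q ^ (⌊4 * inn ((l : Fin c → ℝ) + (1/2 : ℝ) • χ)
              ((l : Fin c → ℝ) + (1/2 : ℝ) • χ)⌋).toNat) ∧
    Summable (fun μ : plusNeighbor Λ χ =>
      q ^ (⌊4 * inn (μ : Fin c → ℝ) (μ : Fin c → ℝ)⌋).toNat) ∧
    Summable (fun μ : minusNeighbor Λ χ =>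
      q ^ (⌊4 * inn (μ : Fin c → ℝ) (μ : Fin c → ℝ)⌋).toNat) ∧
    (∑' l : Λ, ((Int.negOnePow ⌊inn χ (l : Fin c → ℝ)⌋ : ℤˣ) : ℝ) *
        q ^ (⌊4 * inn ((l : Fin c → ℝ) + (1/2 : ℝ) • χ)
                ((l : Fin c → ℝ) + (1/2 : ℝ) • χ)⌋).toNat)
      = (∑' μ : plusNeighbor Λ χ, q ^ (⌊4 * inn (μ : Fin c → ℝ) (μ : Fin c → ℝ)⌋).toNat)
        - (∑' μ : minusNeighbor Λ χ, q ^ (⌊4 * inn (μ : Fin c → ℝ) (μ : Fin c → ℝ)⌋).toNat) :=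
  rr_partition_function_eq_difference_of_thetas_general Λ hDisc hInt hOdd χ hχ hchar q hq0 hq1
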